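/- Let f_1,…,f_n ∈ ℂ[x_1,…,x_n] with deg f_i = d_i, having a finite common zero set V(f) on which the Jacobian determinant J_f = det(∂f_i/∂x_j) is everywhere nonzero. For t ∈ ℂ, t ≠ 0, let f_{t,i} := Σ_{|a| ≤ d_i} c_{ia} t^{d_i − |a|} x^a, where f_i = Σ_{|a| ≤ d_i} c_{ia} x^a. Then the common zero set V(f_t) of f_{t,1},…,f_{t,n} is finite, J_{f_t} is nonzero on it, and for every β ∈ (ℤ_{≥0})^n, Σ_{ξ ∈ V(f_t)} ξ^β / J_{f_t}(ξ) = t^{|β| − ρ} · Σ_{η ∈ V(f)} η^β / J_f(η), where ρ = Σ_{i=1}^n d_i − n and |β| is the sum of the entries of β. -/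

import Mathlib

/-!
Substituting `x = t • y` gives `f_{t,i}(t • y) = t ^ d_i * f_i(y)`, so `V(f_t) = t • V(f)`.
Differentiating monomial by monomial, row `i` of the Jacobian matrix of `f_t` at `t • y` is
`t ^ (d_i - 1)` times row `i` of that of `f` at `y`, whence `J_{f_t}(t • y) = t ^ ρ * J_f(y)`.
Since `(t • y) ^ β = t ^ |β| * y ^ β`, reindexing the sum over `V(f_t)` by `y ↦ t • y` gives the
formula.
-/

open MvPolynomial

/-- The `t`-scaled polynomial of level `d` of `f = Σ_a c_a x^a`, namely
`f_t := Σ_a c_a t^{d − |a|} x^a`, where `|a|` is the sum of the entries of `a`. -/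
noncomputable def scaledPoly {n : ℕ} (f : MvPolynomial (Fin n) ℂ) (d : ℕ) (t : ℂ) :
    MvPolynomial (Fin n) ℂ :=
  ∑ a ∈ f.support, monomial a (f.coeff a * t ^ (d - a.degree))

open scoped Pointwise

section Monomial

variable {σ R : Type*} [CommSemiring R]

theorem eval_smul_monomial (t : R) (y : σ → R) (a : σ →₀ ℕ) (c : R) :
    eval (t • y) (monomial a c) = t ^ a.degree * eval y (monomial a c) := by
  simp only [eval_monomial, Finsupp.prod, Pi.smul_apply, smul_eq_mul, mul_pow,
    Finset.prod_mul_distrib, Finset.prod_pow_eq_pow_sum, Finsupp.degree_apply]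
  ring

theorem Finsupp.degree_sub_single_one {a : σ →₀ ℕ} {j : σ} (hj : a j ≠ 0) :
    (a - Finsupp.single j 1).degree = a.degree - 1 := by
  have hle : Finsupp.single j 1 ≤ a := Finsupp.single_le_iff.mpr (Nat.one_le_iff_ne_zero.mpr hj)
  conv_rhs => rw [← tsub_add_cancel_of_le hle, map_add, Finsupp.degree_single]
  simp

end Monomial

theorem prod_zpow_eq_zpow_sum₀ {ι K : Type*} [Field K] {t : K} (ht : t ≠ 0)
    (s : Finset ι) (z : ι → ℤ) : ∏ i ∈ s, t ^ z i = t ^ ∑ i ∈ s, z i := by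
  induction s using Finset.cons_induction with
  | empty => simp
  | cons i s hi ih => rw [Finset.prod_cons, Finset.sum_cons, ih, zpow_add₀ ht]

noncomputable def zeroSet {ι σ R : Type*} [CommSemiring R] (f : ι → MvPolynomial σ R) :
    Set (σ → R) :=
  {x | ∀ i, eval x (f i) = 0}

noncomputable def jacobian {σ R : Type*} [CommRing R] [Fintype σ] [DecidableEq σ]
    (f : σ → MvPolynomial σ R) : MvPolynomial σ R :=
  (Matrix.of fun i j => pderiv j (f i)).det

theorem eval_smul_scaledPoly {n : ℕ} {f : MvPolynomial (Fin n) ℂ} {d : ℕ}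
    (hd : f.totalDegree ≤ d) (t : ℂ) (y : Fin n → ℂ) :
    eval (t • y) (scaledPoly f d t) = t ^ d * eval y f := by
  conv_rhs => rw [f.as_sum]
  simp only [scaledPoly, map_sum, Finset.mul_sum]
  refine Finset.sum_congr rfl fun a ha => ?_
  have had : a.degree ≤ d := (le_totalDegree ha).trans hd
  obtain ⟨k, rfl⟩ := Nat.exists_eq_add_of_le had
  rw [eval_smul_monomial, eval_monomial, eval_monomial, Nat.add_sub_cancel_left, pow_add]
  ring

-- The `ℤ` exponent keeps the identity true for `d = 0`, where both sides vanish.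
theorem eval_smul_pderiv_scaledPoly {n : ℕ} {f : MvPolynomial (Fin n) ℂ} {d : ℕ}
    (hd : f.totalDegree ≤ d) (t : ℂ) (j : Fin n) (y : Fin n → ℂ) :
    eval (t • y) (pderiv j (scaledPoly f d t)) = t ^ ((d : ℤ) - 1) * eval y (pderiv j f) := by
  conv_rhs => rw [f.as_sum]
  simp only [scaledPoly, map_sum, Finset.mul_sum]
  refine Finset.sum_congr rfl fun a ha => ?_
  rw [pderiv_monomial, pderiv_monomial, eval_smul_monomial]
  by_cases hj : a j = 0
  · simp [hj]
  have had : a.degree ≤ d := (le_totalDegree ha).trans hd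
  obtain ⟨k, rfl⟩ := Nat.exists_eq_add_of_le had
  have hdeg_pos : 1 ≤ a.degree := (Nat.one_le_iff_ne_zero.mpr hj).trans (Finsupp.le_degree j a)
  rw [Finsupp.degree_sub_single_one hj, eval_monomial, eval_monomial, Nat.add_sub_cancel_left,
    show ((a.degree + k : ℕ) : ℤ) - 1 = ((a.degree - 1 + k : ℕ) : ℤ) by omega, zpow_natCast,
    pow_add]
  ring

section Scaling

variable {n : ℕ} {f : Fin n → MvPolynomial (Fin n) ℂ} {d : Fin n → ℕ} {t : ℂ}

theorem zeroSet_scaledPoly (hd : ∀ i, (f i).totalDegree ≤ d i) (ht : t ≠ 0) :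
    zeroSet (fun i => scaledPoly (f i) (d i) t) = t • zeroSet f := by
  ext x
  rw [Set.mem_smul_set_iff_inv_smul_mem₀ ht]
  conv_lhs => rw [← smul_inv_smul₀ ht x]
  simp only [zeroSet, Set.mem_ofPred_eq, eval_smul_scaledPoly (hd _), mul_eq_zero,
    pow_ne_zero _ ht, false_or]

theorem eval_smul_jacobian_scaledPoly (hd : ∀ i, (f i).totalDegree ≤ d i) (ht : t ≠ 0)
    (y : Fin n → ℂ) :
    eval (t • y) (jacobian fun i => scaledPoly (f i) (d i) t) =
      t ^ ((∑ i, (d i : ℤ)) - n) * eval y (jacobian f) := by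
  have hrows : ((Matrix.of fun i j => pderiv j (scaledPoly (f i) (d i) t)).map (eval (t • y))) =
      Matrix.of fun i j =>
        t ^ ((d i : ℤ) - 1) * (Matrix.of fun i j => pderiv j (f i)).map (eval y) i j := by
    ext i j
    exact eval_smul_pderiv_scaledPoly (hd i) t j y
  rw [jacobian, jacobian, RingHom.map_det, RingHom.map_det, RingHom.mapMatrix_apply,
    RingHom.mapMatrix_apply, hrows, Matrix.det_mul_column, prod_zpow_eq_zpow_sum₀ ht,
    Finset.sum_sub_distrib]
  simp only [Finset.sum_const, Finset.card_univ, Fintype.card_fin, Int.nsmul_eq_mul, mul_one]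

theorem finite_zeroSet_scaledPoly (hd : ∀ i, (f i).totalDegree ≤ d i) (ht : t ≠ 0)
    (hfin : (zeroSet f).Finite) : (zeroSet fun i => scaledPoly (f i) (d i) t).Finite := by
  rw [zeroSet_scaledPoly hd ht]
  exact hfin.smul_set

theorem eval_jacobian_scaledPoly_ne_zero (hd : ∀ i, (f i).totalDegree ≤ d i) (ht : t ≠ 0)
    (hsimple : ∀ x ∈ zeroSet f, eval x (jacobian f) ≠ 0) :
    ∀ x ∈ zeroSet (fun i => scaledPoly (f i) (d i) t),
      eval x (jacobian fun i => scaledPoly (f i) (d i) t) ≠ 0 := by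
  rw [zeroSet_scaledPoly hd ht]
  rintro _ ⟨y, hy, rfl⟩
  rw [eval_smul_jacobian_scaledPoly hd ht]
  exact mul_ne_zero (zpow_ne_zero _ ht) (hsimple y hy)

theorem residue_scaledPoly (hd : ∀ i, (f i).totalDegree ≤ d i) (ht : t ≠ 0) (β : Fin n → ℕ) :
    ∑ᶠ ξ ∈ zeroSet (fun i => scaledPoly (f i) (d i) t),
        (∏ i, ξ i ^ β i) / eval ξ (jacobian fun i => scaledPoly (f i) (d i) t) =
      t ^ ((∑ i, (β i : ℤ)) - ((∑ i, (d i : ℤ)) - n)) *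
        ∑ᶠ η ∈ zeroSet f, (∏ i, η i ^ β i) / eval η (jacobian f) := by
  rw [zeroSet_scaledPoly hd ht, ← Set.image_smul,
    finsum_mem_image (smul_right_injective _ ht).injOn, mul_finsum_mem]
  refine finsum_mem_congr rfl fun η _ => ?_
  have hmonomial : ∏ i, (t • η) i ^ β i = t ^ (∑ i, (β i : ℤ)) * ∏ i, η i ^ β i := by
    simp only [Pi.smul_apply, smul_eq_mul, mul_pow, Finset.prod_mul_distrib,
      Finset.prod_pow_eq_pow_sum, ← Nat.cast_sum, zpow_natCast]
  rw [hmonomial, eval_smul_jacobian_scaledPoly hd ht, zpow_sub₀ ht (∑ i, (β i : ℤ)),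
    div_mul_div_comm]

end Scaling

/-- Let `f_1,…,f_n ∈ ℂ[x_1,…,x_n]` have a finite common zero set `V(f)` on which the Jacobian
`J_f` is everywhere nonzero, and let `t ≠ 0`.  Then the common zero set `V(f_t)` of the scaled
system is finite, `J_{f_t}` is nonzero on it, and for every `β ∈ (ℤ_{≥0})^n`,
`Σ_{ξ ∈ V(f_t)} ξ^β / J_{f_t}(ξ) = t^{|β| − ρ} · Σ_{η ∈ V(f)} η^β / J_f(η)`,
where `ρ = Σ deg f_i − n`. -/
theorem residue_scaled_system {n : ℕ} (f : Fin n → MvPolynomial (Fin n) ℂ)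
    (hfin : {x : Fin n → ℂ | ∀ i, eval x (f i) = 0}.Finite)
    (hsimple : ∀ x ∈ {x : Fin n → ℂ | ∀ i, eval x (f i) = 0},
      eval x (Matrix.of fun i j => pderiv j (f i)).det ≠ 0)
    (t : ℂ) (ht : t ≠ 0) :
    {x : Fin n → ℂ | ∀ i, eval x (scaledPoly (f i) ((f i).totalDegree) t) = 0}.Finite ∧
    (∀ x ∈ {x : Fin n → ℂ | ∀ i, eval x (scaledPoly (f i) ((f i).totalDegree) t) = 0},
      eval x (Matrix.of fun i j => pderiv j (scaledPoly (f i) ((f i).totalDegree) t)).det ≠ 0) ∧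
    ∀ β : Fin n → ℕ,
      (∑ᶠ ξ ∈ {x : Fin n → ℂ | ∀ i, eval x (scaledPoly (f i) ((f i).totalDegree) t) = 0},
        (∏ i, ξ i ^ β i) /
          eval ξ (Matrix.of fun i j => pderiv j (scaledPoly (f i) ((f i).totalDegree) t)).det) =
      t ^ ((∑ i, (β i : ℤ)) - ((∑ i, ((f i).totalDegree : ℤ)) - (n : ℤ))) *
        ∑ᶠ η ∈ {x : Fin n → ℂ | ∀ i, eval x (f i) = 0},
          (∏ i, η i ^ β i) / eval η (Matrix.of fun i j => pderiv j (f i)).det := by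
  have hd : ∀ i, (f i).totalDegree ≤ (f i).totalDegree := fun _ => le_rfl
  exact ⟨finite_zeroSet_scaledPoly hd ht hfin, eval_jacobian_scaledPoly_ne_zero hd ht hsimple,
    residue_scaledPoly hd ht⟩
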